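/- arXiv:2505.05249 — 5 statements merged into one kernel-verified Lean document; each statement's English description precedes it below -/
import Mathlib

section
/- (Corollary 1, Ancilla reuse after measure–reset.) For every matrix ρ on the full register A × M, the post-measurement-reset state factorizes as 𝓜 ρ = (Matrix.stdBasisMatrix x₀ x₀ 1) ⊗ₖ (∑ x : A, (K x) * ρ * (K x)ᴴ); that is, the ancillas are deterministically in the state |0⟩⟨0| and are unentangled from the main register. -/
/-!
Conjugating by the branch operator `E x = |x₀⟩⟨x| ⊗ 1` cuts out the `(x, x)` block of
`U ρ Uᴴ` and places it in the `(x₀, x₀)` block; that block is exactly `K x ρ (K x)ᴴ`,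
since `K x` is the `x`-th block row of `U`. Summing over `x` and pulling the common factor
`|x₀⟩⟨x₀|` out of the Kronecker product gives the factorization.
-/

open Matrix Kronecker

namespace Matrix

variable {ι κ l m n p : Type*} {R : Type*}

theorem kronecker_sum [CommSemiring R] (A : Matrix ι κ R) (s : Finset l)
    (B : l → Matrix n p R) :
    A ⊗ₖ (∑ i ∈ s, B i) = ∑ i ∈ s, A ⊗ₖ B i :=
  map_sum (kroneckerBilinear (R := R) A) B s

theorem single_kronecker_one_mul_mul_single_kronecker_one [CommSemiring R] [Fintype ι]
    [Fintype n] [DecidableEq ι] [DecidableEq n] (a x y b : ι) (B : Matrix (ι × n) (ι × n) R) :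
    (single a x 1 ⊗ₖ (1 : Matrix n n R)) * B * (single y b 1 ⊗ₖ (1 : Matrix n n R)) =
      single a b 1 ⊗ₖ B.submatrix (Prod.mk x) (Prod.mk y) := by
  ext ⟨c, i⟩ ⟨d, j⟩
  by_cases hc : a = c <;> by_cases hd : b = d <;>
    simp [hc, hd, mul_apply, Fintype.sum_prod_type, single_apply, one_apply]

theorem submatrix_mul_mul_conjTranspose_submatrix [CommSemiring R] [StarRing R] [Fintype m]
    [Fintype n] (U : Matrix m n R) (ρ : Matrix n n R) (r : l → m) :
    U.submatrix r id * ρ * (U.submatrix r id)ᴴ = (U * ρ * Uᴴ).submatrix r r := by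
  rw [submatrix_mul _ _ _ id _ Function.bijective_id,
    submatrix_mul _ _ _ id _ Function.bijective_id, submatrix_id_id, conjTranspose_submatrix]

end Matrix

theorem measure_reset_factorizes_general {A M : Type*} [Fintype A] [Fintype M]
    [DecidableEq A] [DecidableEq M]
    (x₀ : A)
    (U : Matrix (A × M) (A × M) ℂ)
    (K : A → Matrix M (A × M) ℂ)
    (hK : ∀ (x : A) (i : M) (y : A) (j : M), K x i (y, j) = U (x, i) (y, j))
    (E : A → Matrix (A × M) (A × M) ℂ)
    (hE : ∀ x : A, E x = (Matrix.single x₀ x (1 : ℂ)) ⊗ₖ (1 : Matrix M M ℂ))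
    (𝓜 : Matrix (A × M) (A × M) ℂ → Matrix (A × M) (A × M) ℂ)
    (h𝓜 : ∀ ρ, 𝓜 ρ = ∑ x : A, E x * U * ρ * Uᴴ * (E x)ᴴ) :
    ∀ ρ : Matrix (A × M) (A × M) ℂ,
      𝓜 ρ = (Matrix.single x₀ x₀ (1 : ℂ)) ⊗ₖ (∑ x : A, (K x) * ρ * (K x)ᴴ) := by
  intro ρ
  have hK_block_row : ∀ x, K x = U.submatrix (Prod.mk x) id :=
    fun x => ext fun i p => hK x i p.1 p.2
  have h_branch :
      ∀ x, E x * U * ρ * Uᴴ * (E x)ᴴ = single x₀ x₀ 1 ⊗ₖ (K x * ρ * (K x)ᴴ) := by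
    intro x
    rw [hK_block_row, submatrix_mul_mul_conjTranspose_submatrix,
      ← single_kronecker_one_mul_mul_single_kronecker_one, hE, conjTranspose_kronecker,
      conjTranspose_single, conjTranspose_one, star_one]
    simp only [Matrix.mul_assoc]
  rw [h𝓜, kronecker_sum]
  exact Finset.sum_congr rfl fun x _ => h_branch x

/-- Corollary 1, Ancilla reuse after measure–reset: the
post-measurement-reset state factorizes with the ancillas deterministically in
`|0⟩⟨0|`, unentangled from the main register. -/
theorem measure_reset_factorizes {A M : Type*} [Fintype A] [Fintype M]
    [Nonempty A] [Nonempty M] [DecidableEq A] [DecidableEq M]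
    (x₀ : A)
    (U : Matrix (A × M) (A × M) ℂ) (hU : Uᴴ * U = 1)
    (K : A → Matrix M (A × M) ℂ)
    (hK : ∀ (x : A) (i : M) (y : A) (j : M), K x i (y, j) = U (x, i) (y, j))
    (E : A → Matrix (A × M) (A × M) ℂ)
    (hE : ∀ x : A, E x = (Matrix.single x₀ x (1 : ℂ)) ⊗ₖ (1 : Matrix M M ℂ))
    (𝓜 : Matrix (A × M) (A × M) ℂ → Matrix (A × M) (A × M) ℂ)
    (h𝓜 : ∀ ρ, 𝓜 ρ = ∑ x : A, E x * U * ρ * Uᴴ * (E x)ᴴ) :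
    ∀ ρ : Matrix (A × M) (A × M) ℂ,
      𝓜 ρ = (Matrix.single x₀ x₀ (1 : ℂ)) ⊗ₖ (∑ x : A, (K x) * ρ * (K x)ᴴ) :=
  measure_reset_factorizes_general x₀ U K hK E hE 𝓜 h𝓜
end

section
/- A single measure-and-reset layer applied to an ancilla-reset input acts on the main register as the Kraus channel of the main-system Kraus operators: for every σ : Matrix M M ℂ, Tr_anc (𝓜 ((Matrix.stdBasisMatrix x₀ x₀ 1) ⊗ₖ σ)) = ∑ x : A, (𝐀 x) * σ * (𝐀 x)ᴴ. -/
open Matrix Kronecker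

/-!
The branch `E x` moves the `(x, x)` ancilla block of `U (|x₀⟩⟨x₀| ⊗ σ) Uᴴ` to position
`(x₀, x₀)`, so the partial trace of the `x`-th branch is exactly that block. By block
multiplication it equals `𝒜 x * σ * (𝒜 x)ᴴ`, because `𝒜 x` is the `(x, x₀)` block of `U`.
-/

namespace Matrix

variable {R A M : Type*} [Fintype A]

def traceLeft [AddCommMonoid R] (τ : Matrix (A × M) (A × M) R) : Matrix M M R :=
  ∑ a, τ.submatrix (Prod.mk a) (Prod.mk a)

theorem traceLeft_sum [AddCommMonoid R] {ι : Type*} (s : Finset ι)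
    (τ : ι → Matrix (A × M) (A × M) R) :
    traceLeft (∑ k ∈ s, τ k) = ∑ k ∈ s, traceLeft (τ k) := by
  ext i j
  simp only [traceLeft, sum_apply, submatrix_apply]
  exact Finset.sum_comm

variable [Fintype M] [DecidableEq A]

theorem submatrix_mul_single_kronecker_mul [Semiring R] (P Q : Matrix (A × M) (A × M) R)
    (a b x y : A) (σ : Matrix M M R) :
    (P * (single a b 1 ⊗ₖ σ) * Q).submatrix (Prod.mk x) (Prod.mk y) =
      P.submatrix (Prod.mk x) (Prod.mk a) * σ * Q.submatrix (Prod.mk b) (Prod.mk y) := by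
  ext i j
  simp [mul_apply, Fintype.sum_prod_type, single_apply, ite_and]

theorem traceLeft_single_kronecker_one_mul_mul_conjTranspose [DecidableEq M] [Semiring R]
    [StarRing R] (τ : Matrix (A × M) (A × M) R) (c x : A) :
    traceLeft ((single c x 1 ⊗ₖ (1 : Matrix M M R)) * τ *
        (single c x 1 ⊗ₖ (1 : Matrix M M R))ᴴ) =
      τ.submatrix (Prod.mk x) (Prod.mk x) := by
  ext i j
  simp [traceLeft, sum_apply, mul_apply, conjTranspose_apply, Fintype.sum_prod_type,
    single_apply, one_apply, ite_and, apply_ite (star : R → R)]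

end Matrix

theorem single_layer_main_channel_general {A M : Type*} [Fintype A] [Fintype M]
    [DecidableEq A] [DecidableEq M]
    (x₀ : A)
    (U : Matrix (A × M) (A × M) ℂ)
    (E : A → Matrix (A × M) (A × M) ℂ)
    (hE : ∀ x : A, E x = (Matrix.single x₀ x (1 : ℂ)) ⊗ₖ (1 : Matrix M M ℂ))
    (𝓜 : Matrix (A × M) (A × M) ℂ → Matrix (A × M) (A × M) ℂ)
    (h𝓜 : ∀ ρ, 𝓜 ρ = ∑ x : A, E x * U * ρ * Uᴴ * (E x)ᴴ)
    (TrAnc : Matrix (A × M) (A × M) ℂ → Matrix M M ℂ)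
    (hTrAnc : ∀ (τ : Matrix (A × M) (A × M) ℂ) (i j : M),
      TrAnc τ i j = ∑ a : A, τ (a, i) (a, j))
    (𝒜 : A → Matrix M M ℂ)
    (h𝒜 : ∀ (x : A) (i j : M), 𝒜 x i j = U (x, i) (x₀, j)) :
    ∀ σ : Matrix M M ℂ,
      TrAnc (𝓜 ((Matrix.single x₀ x₀ (1 : ℂ)) ⊗ₖ σ)) =
        ∑ x : A, (𝒜 x) * σ * (𝒜 x)ᴴ := by
  intro σ
  have hTr : ∀ τ, TrAnc τ = traceLeft τ := fun τ => by
    ext i j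
    simp only [hTrAnc, traceLeft, Matrix.sum_apply, submatrix_apply]
  have h𝒜_block : ∀ x, 𝒜 x = U.submatrix (Prod.mk x) (Prod.mk x₀) := fun x => ext (h𝒜 x)
  calc TrAnc (𝓜 (single x₀ x₀ 1 ⊗ₖ σ))
      = ∑ x, traceLeft (E x * (U * (single x₀ x₀ 1 ⊗ₖ σ) * Uᴴ) * (E x)ᴴ) := by
        simp only [hTr, h𝓜, traceLeft_sum, Matrix.mul_assoc]
    _ = ∑ x, (U * (single x₀ x₀ 1 ⊗ₖ σ) * Uᴴ).submatrix (Prod.mk x) (Prod.mk x) := by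
        simp only [hE, traceLeft_single_kronecker_one_mul_mul_conjTranspose]
    _ = ∑ x, 𝒜 x * σ * (𝒜 x)ᴴ := by
        simp only [submatrix_mul_single_kronecker_mul, ← conjTranspose_submatrix, h𝒜_block]

/-- a single measure-and-reset layer applied to an ancilla-reset
input acts on the main register as the Kraus channel of the main-system Kraus
operators. -/
theorem single_layer_main_channel {A M : Type*} [Fintype A] [Fintype M]
    [Nonempty A] [Nonempty M] [DecidableEq A] [DecidableEq M]
    (x₀ : A)
    (U : Matrix (A × M) (A × M) ℂ) (hU : Uᴴ * U = 1)
    (E : A → Matrix (A × M) (A × M) ℂ)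
    (hE : ∀ x : A, E x = (Matrix.single x₀ x (1 : ℂ)) ⊗ₖ (1 : Matrix M M ℂ))
    (𝓜 : Matrix (A × M) (A × M) ℂ → Matrix (A × M) (A × M) ℂ)
    (h𝓜 : ∀ ρ, 𝓜 ρ = ∑ x : A, E x * U * ρ * Uᴴ * (E x)ᴴ)
    (TrAnc : Matrix (A × M) (A × M) ℂ → Matrix M M ℂ)
    (hTrAnc : ∀ (τ : Matrix (A × M) (A × M) ℂ) (i j : M),
      TrAnc τ i j = ∑ a : A, τ (a, i) (a, j))
    (𝒜 : A → Matrix M M ℂ)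
    (h𝒜 : ∀ (x : A) (i j : M), 𝒜 x i j = U (x, i) (x₀, j)) :
    ∀ σ : Matrix M M ℂ,
      TrAnc (𝓜 ((Matrix.single x₀ x₀ (1 : ℂ)) ⊗ₖ σ)) =
        ∑ x : A, (𝒜 x) * σ * (𝒜 x)ᴴ :=
  single_layer_main_channel_general x₀ U E hE 𝓜 h𝓜 TrAnc hTrAnc 𝒜 h𝒜
end

section
/- (Lemma 2, Surrogate Descent, guaranteed-decrease form.) Suppose C > 0. Let θ, s ∈ E and ε, η ∈ ℝ with 0 ≤ ε ≤ ‖g θ‖ / 4, ‖s − g θ‖ ≤ ε, and 0 ≤ η ≤ 8 / (25 * C). Set θ' = θ − η • s. Then L θ' ≤ L θ − (η / 2) * ‖g θ‖^2. -/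
/-!
Along the segment `t ↦ x + t • v` the derivative of `L` is `⟪g (x + t • v), v⟫`, which exceeds
`⟪g x, v⟫` by at most `C t ‖v‖²`; integrating gives the descent lemma
`L (x + v) ≤ L x + ⟪g x, v⟫ + C/2 ‖v‖²`. For `v = -η s`, the closeness `‖s - g θ‖ ≤ ‖g θ‖/4`
gives `⟪g θ, s⟫ ≥ 3/4 ‖g θ‖²` and `‖s‖ ≤ 5/4 ‖g θ‖`, so the step decreases `L` by at least
`η (3/4 - 25/32 · η C) ‖g θ‖²`, which is `≥ η/2 ‖g θ‖²` as soon as `η C ≤ 8/25`.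
-/

open scoped InnerProductSpace

section InnerProduct

variable {E : Type*} [NormedAddCommGroup E] [InnerProductSpace ℝ E]

theorem sq_norm_sub_norm_mul_norm_sub_le_inner (u s : E) :
    ‖u‖ ^ 2 - ‖u‖ * ‖s - u‖ ≤ ⟪u, s⟫_ℝ := by
  have hsplit : ⟪u, s⟫_ℝ = ‖u‖ ^ 2 + ⟪u, s - u⟫_ℝ := by
    rw [inner_sub_right, real_inner_self_eq_norm_sq]; ring
  linarith [neg_le_of_abs_le (abs_real_inner_le_norm u (s - u))]

theorem inner_sub_add_smul_le_of_lipschitzWith {g : E → E} {C : NNReal} (hg : LipschitzWith C g)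
    (x v : E) {t : ℝ} (ht : 0 ≤ t) :
    ⟪g (x + t • v), v⟫_ℝ - ⟪g x, v⟫_ℝ ≤ C * t * ‖v‖ ^ 2 :=
  calc ⟪g (x + t • v), v⟫_ℝ - ⟪g x, v⟫_ℝ = ⟪g (x + t • v) - g x, v⟫_ℝ := (inner_sub_left ..).symm
    _ ≤ ‖g (x + t • v) - g x‖ * ‖v‖ := real_inner_le_norm _ _
    _ ≤ C * ‖t • v‖ * ‖v‖ := by
      gcongr
      simpa [dist_eq_norm] using hg.dist_le_mul (x + t • v) x
    _ = C * t * ‖v‖ ^ 2 := by rw [norm_smul, Real.norm_of_nonneg ht]; ring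

variable [CompleteSpace E]

theorem HasGradientAt.hasDerivAt_comp_add_smul {f : E → ℝ} {f' x v : E} {t : ℝ}
    (hf : HasGradientAt f f' (x + t • v)) :
    HasDerivAt (fun t : ℝ => f (x + t • v)) ⟪f', v⟫_ℝ t := by
  have hline : HasDerivAt (fun t : ℝ => x + t • v) v t := by
    simpa using ((hasDerivAt_id t).smul_const v).const_add x
  exact (hasGradientAt_iff_hasFDerivAt.mp hf).comp_hasDerivAt t hline

theorem image_add_le_of_hasGradientAt_of_lipschitzWith {L : E → ℝ} {g : E → E}
    (hL : ∀ x, HasGradientAt L (g x) x) {C : NNReal} (hg : LipschitzWith C g) (x v : E) :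
    L (x + v) ≤ L x + ⟪g x, v⟫_ℝ + C / 2 * ‖v‖ ^ 2 := by
  set φ : ℝ → ℝ := fun t => L (x + t • v) - t * ⟪g x, v⟫_ℝ - C / 2 * t ^ 2 * ‖v‖ ^ 2
  have hφ : ∀ t, HasDerivAt φ (⟪g (x + t • v), v⟫_ℝ - ⟪g x, v⟫_ℝ - C * t * ‖v‖ ^ 2) t := by
    intro t
    have hquad := ((hasDerivAt_pow 2 t).const_mul ((C : ℝ) / 2)).mul_const (‖v‖ ^ 2)
    exact (((hL _).hasDerivAt_comp_add_smul.sub (hasDerivAt_mul_const _)).sub hquad).congr_deriv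
      (by push_cast; ring)
  have hanti : AntitoneOn φ (Set.Icc 0 1) := by
    refine antitoneOn_of_hasDerivWithinAt_nonpos (convex_Icc 0 1)
      (fun t _ => (hφ t).continuousAt.continuousWithinAt) (fun t _ => (hφ t).hasDerivWithinAt)
      fun t ht => ?_
    rw [interior_Icc] at ht
    linarith [inner_sub_add_smul_le_of_lipschitzWith hg x v ht.1.le]
  have hφ01 := hanti (Set.left_mem_Icc.mpr zero_le_one) (Set.right_mem_Icc.mpr zero_le_one)
    zero_le_one
  simp only [φ, zero_smul, add_zero, zero_mul, one_smul, one_mul, one_pow, mul_one, sub_zero,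
    ne_eq, OfNat.ofNat_ne_zero, not_false_eq_true, zero_pow, mul_zero] at hφ01
  linarith

end InnerProduct

theorem surrogate_descent_decrease_general
    {E : Type*} [NormedAddCommGroup E] [InnerProductSpace ℝ E] [CompleteSpace E]
    (L : E → ℝ) (g : E → E) (hg : ∀ x : E, HasGradientAt L (g x) x)
    (C : NNReal) (hLip : LipschitzWith C g)
    (θ s : E) (ε η : ℝ)
    (hε : ε ≤ ‖g θ‖ / 4)
    (hs : ‖s - g θ‖ ≤ ε)
    (hη0 : 0 ≤ η) (hη : η ≤ 8 / (25 * (C : ℝ))) :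
    L (θ - η • s) ≤ L θ - (η / 2) * ‖g θ‖ ^ 2 := by
  set G := ‖g θ‖
  have hstep := image_add_le_of_hasGradientAt_of_lipschitzWith hg hLip θ (-(η • s))
  rw [← sub_eq_add_neg, inner_neg_right, real_inner_smul_right, norm_neg, norm_smul,
    Real.norm_of_nonneg hη0] at hstep
  have hinner : 3 / 4 * G ^ 2 ≤ ⟪g θ, s⟫_ℝ := by
    nlinarith [sq_norm_sub_norm_mul_norm_sub_le_inner (g θ) s, norm_nonneg (g θ)]
  have hnorm : ‖s‖ ≤ 5 / 4 * G := by linarith [norm_le_norm_add_norm_sub' s (g θ)]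
  have hηC : η * C ≤ 8 / 25 := by
    rcases (C.coe_nonneg).eq_or_lt with hC | hC
    · rw [← hC, mul_zero]; norm_num
    · rw [le_div_iff₀ (by positivity)] at hη; linarith
  calc L (θ - η • s) ≤ L θ + -(η * ⟪g θ, s⟫_ℝ) + C / 2 * (η * ‖s‖) ^ 2 := hstep
    _ ≤ L θ + -(η * (3 / 4 * G ^ 2)) + C / 2 * (η * (5 / 4 * G)) ^ 2 := by gcongr
    _ = L θ - η * (3 / 4 - 25 / 32 * (η * C)) * G ^ 2 := by ring
    _ ≤ L θ - η / 2 * G ^ 2 := by nlinarith [mul_nonneg hη0 (sq_nonneg G)]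

/-- Lemma 2, Surrogate Descent, guaranteed-decrease form. -/
theorem surrogate_descent_decrease
    {E : Type*} [NormedAddCommGroup E] [InnerProductSpace ℝ E] [CompleteSpace E]
    (L : E → ℝ) (g : E → E) (hg : ∀ x : E, HasGradientAt L (g x) x)
    (C : NNReal) (hLip : LipschitzWith C g) (hC : 0 < (C : ℝ))
    (θ s : E) (ε η : ℝ)
    (hε0 : 0 ≤ ε) (hε : ε ≤ ‖g θ‖ / 4)
    (hs : ‖s - g θ‖ ≤ ε)
    (hη0 : 0 ≤ η) (hη : η ≤ 8 / (25 * (C : ℝ))) :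
    L (θ - η • s) ≤ L θ - (η / 2) * ‖g θ‖ ^ 2 :=
  surrogate_descent_decrease_general L g hg C hLip θ s ε η hε hs hη0 hη
end

section
/- (Theorem 2, telescoping bound.) Suppose C > 0 and L is bounded below: B ≤ L x for all x ∈ E. Let θ, s : ℕ → E and η, ε : ℕ → ℝ satisfy, for all t: θ (t+1) = θ t − η t • s t; ‖s t − g (θ t)‖ ≤ ε t; 0 ≤ ε t ≤ ‖g (θ t)‖ / 4; and 0 ≤ η t ≤ 8 / (25 * C). Then for every T : ℕ, ∑_{t ∈ Finset.range T} η t * ‖g (θ t)‖^2 ≤ 2 * (L (θ 0) − B); in particular the series ∑ t, η t * ‖g (θ t)‖^2 is summable. -/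
/-!
Along the segment from `x` to `x + v` the Lipschitz bound on the derivative gives the descent
inequality `L (x + v) ≤ L x + ⟪∇L x, v⟫ + C/2 ‖v‖²`. For the inexact step `v = -η s` with
`‖s - ∇L x‖ ≤ ‖∇L x‖/4` one has `⟪∇L x, s⟫ ≥ 3/4 ‖∇L x‖²` and `‖s‖ ≤ 5/4 ‖∇L x‖`, so the step size
bound `C η ≤ 8/25` leaves a decrease of at least `η ‖∇L x‖² / 2` per step. Summing telescopes,
and `L ≥ B` bounds the total.
-/

open InnerProductSpace Set
open scoped NNReal

theorem apply_add_le_of_lipschitzWith_fderiv {E : Type*} [NormedAddCommGroup E] [NormedSpace ℝ E]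
    {f : E → ℝ} {f' : E → E →L[ℝ] ℝ} {C : ℝ≥0} (hf : ∀ x, HasFDerivAt f (f' x) x)
    (hf' : LipschitzWith C f') (x v : E) :
    f (x + v) ≤ f x + f' x v + C / 2 * ‖v‖ ^ 2 := by
  -- `φ` is antitone on `[0, 1]`; comparing `φ 1 ≤ φ 0` is the claim.
  set φ : ℝ → ℝ := fun t ↦ f (x + t • v) - t * f' x v - C / 2 * t ^ 2 * ‖v‖ ^ 2
  set φ' : ℝ → ℝ := fun t ↦ f' (x + t • v) v - f' x v - C * t * ‖v‖ ^ 2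
  have hφ : ∀ t, HasDerivAt φ (φ' t) t := by
    intro t
    have hline : HasDerivAt (fun t : ℝ ↦ x + t • v) v t := by
      simpa using ((hasDerivAt_id t).smul_const v).const_add x
    have := (((hf _).comp_hasDerivAt t hline).sub ((hasDerivAt_id t).mul_const (f' x v))).sub
      (((hasDerivAt_pow 2 t).const_mul (C / 2 : ℝ)).mul_const (‖v‖ ^ 2))
    exact this.congr_deriv (by simp only [φ']; push_cast; ring)
  have hφ'_nonpos : ∀ t ∈ interior (Icc (0 : ℝ) 1), φ' t ≤ 0 := by
    intro t ht
    rw [interior_Icc] at ht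
    have hdist : ‖f' (x + t • v) - f' x‖ ≤ C * (t * ‖v‖) := by
      simpa [dist_eq_norm, norm_smul, abs_of_pos ht.1] using hf'.dist_le_mul (x + t • v) x
    calc φ' t = (f' (x + t • v) - f' x) v - C * t * ‖v‖ ^ 2 := by simp [φ']
      _ ≤ ‖f' (x + t • v) - f' x‖ * ‖v‖ - C * t * ‖v‖ ^ 2 :=
        sub_le_sub_right ((Real.le_norm_self _).trans (ContinuousLinearMap.le_opNorm _ _)) _
      _ ≤ C * (t * ‖v‖) * ‖v‖ - C * t * ‖v‖ ^ 2 := by gcongr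
      _ = 0 := by ring
  have hanti := antitoneOn_of_hasDerivWithinAt_nonpos (convex_Icc 0 1)
    (fun t _ ↦ (hφ t).continuousAt.continuousWithinAt)
    (fun t _ ↦ (hφ t).hasDerivWithinAt) hφ'_nonpos
  have := hanti (left_mem_Icc.2 zero_le_one) (right_mem_Icc.2 zero_le_one) zero_le_one
  simp only [φ, one_smul, zero_smul, add_zero, one_mul, zero_mul, one_pow] at this
  norm_num at this
  linarith

theorem apply_add_le_of_lipschitzWith_gradient {E : Type*} [NormedAddCommGroup E]
    [InnerProductSpace ℝ E] [CompleteSpace E] {f : E → ℝ} {g : E → E} {C : ℝ≥0}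
    (hf : ∀ x, HasGradientAt f (g x) x) (hg : LipschitzWith C g) (x v : E) :
    f (x + v) ≤ f x + ⟪g x, v⟫_ℝ + C / 2 * ‖v‖ ^ 2 := by
  have := apply_add_le_of_lipschitzWith_fderiv hf
    (LipschitzWith.of_dist_le_mul fun a b ↦ by simpa using hg.dist_le_mul a b) x v
  simpa using this

theorem sq_norm_sub_mul_le_real_inner {E : Type*} [NormedAddCommGroup E] [InnerProductSpace ℝ E]
    {u w : E} {r : ℝ} (h : ‖w - u‖ ≤ r) : ‖u‖ ^ 2 - ‖u‖ * r ≤ ⟪u, w⟫_ℝ := by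
  have hsplit : ⟪u, w⟫_ℝ = ‖u‖ ^ 2 + ⟪u, w - u⟫_ℝ := by
    rw [inner_sub_right, real_inner_self_eq_norm_sq]; ring
  have := neg_le_of_abs_le (abs_real_inner_le_norm u (w - u))
  nlinarith [mul_le_mul_of_nonneg_left h (norm_nonneg u)]

theorem apply_sub_smul_le_of_norm_sub_gradient_le {E : Type*} [NormedAddCommGroup E]
    [InnerProductSpace ℝ E] [CompleteSpace E] {f : E → ℝ} {g : E → E} {C : ℝ≥0}
    (hf : ∀ x, HasGradientAt f (g x) x) (hg : LipschitzWith C g) {x s : E} {η : ℝ}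
    (hs : ‖s - g x‖ ≤ ‖g x‖ / 4) (hη0 : 0 ≤ η) (hη : C * η ≤ 8 / 25) :
    f (x - η • s) ≤ f x - η * ‖g x‖ ^ 2 / 2 := by
  set G := ‖g x‖
  have hdescent := apply_add_le_of_lipschitzWith_gradient hf hg x (-(η • s))
  rw [← sub_eq_add_neg, inner_neg_right, real_inner_smul_right, norm_neg, norm_smul,
    Real.norm_eq_abs, mul_pow, sq_abs] at hdescent
  have hinner : 3 / 4 * G ^ 2 ≤ ⟪g x, s⟫_ℝ := by
    nlinarith [sq_norm_sub_mul_le_real_inner hs, norm_nonneg (g x)]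
  have hnorm : ‖s‖ ^ 2 ≤ 25 / 16 * G ^ 2 := by
    have := norm_le_norm_add_norm_sub' s (g x)
    nlinarith [norm_nonneg s]
  have hquad : C / 2 * (η ^ 2 * ‖s‖ ^ 2) ≤ η * G ^ 2 / 4 := by
    calc C / 2 * (η ^ 2 * ‖s‖ ^ 2) = (C * η) * η * ‖s‖ ^ 2 / 2 := by ring
      _ ≤ 8 / 25 * η * (25 / 16 * G ^ 2) / 2 := by gcongr
      _ = η * G ^ 2 / 4 := by ring
  nlinarith [mul_le_mul_of_nonneg_left hinner hη0]

theorem sum_range_le_sub_of_le_sub_succ {a f : ℕ → ℝ} (ha : ∀ t, a t ≤ f t - f (t + 1)) (T : ℕ) :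
    ∑ t ∈ Finset.range T, a t ≤ f 0 - f T := by
  rw [← Finset.sum_range_sub' f T]
  exact Finset.sum_le_sum fun t _ ↦ ha t

theorem surrogate_telescoping_bound_general
    {E : Type*} [NormedAddCommGroup E] [InnerProductSpace ℝ E] [CompleteSpace E]
    (L : E → ℝ) (g : E → E) (hg : ∀ x : E, HasGradientAt L (g x) x)
    (C : NNReal) (hLip : LipschitzWith C g)
    (B : ℝ) (hB : ∀ x : E, B ≤ L x)
    (θ s : ℕ → E) (η ε : ℕ → ℝ)
    (hθ : ∀ t : ℕ, θ (t + 1) = θ t - η t • s t)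
    (hs : ∀ t : ℕ, ‖s t - g (θ t)‖ ≤ ε t)
    (hε : ∀ t : ℕ, ε t ≤ ‖g (θ t)‖ / 4)
    (hη0 : ∀ t : ℕ, 0 ≤ η t) (hη : ∀ t : ℕ, η t ≤ 8 / (25 * (C : ℝ))) :
    (∀ T : ℕ, ∑ t ∈ Finset.range T, η t * ‖g (θ t)‖ ^ 2 ≤ 2 * (L (θ 0) - B)) ∧
      Summable (fun t : ℕ => η t * ‖g (θ t)‖ ^ 2) := by
  have hCη (t : ℕ) : C * η t ≤ 8 / 25 := by
    rcases C.coe_nonneg.eq_or_lt with hC | hC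
    · norm_num [← hC]
    · have := hη t
      rw [le_div_iff₀ (by positivity)] at this
      linarith
  have hdecrease (t : ℕ) : η t * ‖g (θ t)‖ ^ 2 / 2 ≤ L (θ t) - L (θ (t + 1)) := by
    have := apply_sub_smul_le_of_norm_sub_gradient_le hg hLip ((hs t).trans (hε t)) (hη0 t) (hCη t)
    rw [hθ t]
    linarith
  have hbound (T : ℕ) : ∑ t ∈ Finset.range T, η t * ‖g (θ t)‖ ^ 2 ≤ 2 * (L (θ 0) - B) := by
    have := sum_range_le_sub_of_le_sub_succ hdecrease T
    rw [← Finset.sum_div] at this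
    linarith [hB (θ T)]
  exact ⟨hbound, summable_of_sum_range_le (fun t ↦ mul_nonneg (hη0 t) (sq_nonneg _)) hbound⟩

/-- Theorem 2, telescoping bound. -/
theorem surrogate_telescoping_bound
    {E : Type*} [NormedAddCommGroup E] [InnerProductSpace ℝ E] [CompleteSpace E]
    (L : E → ℝ) (g : E → E) (hg : ∀ x : E, HasGradientAt L (g x) x)
    (C : NNReal) (hLip : LipschitzWith C g) (hC : 0 < (C : ℝ))
    (B : ℝ) (hB : ∀ x : E, B ≤ L x)
    (θ s : ℕ → E) (η ε : ℕ → ℝ)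
    (hθ : ∀ t : ℕ, θ (t + 1) = θ t - η t • s t)
    (hs : ∀ t : ℕ, ‖s t - g (θ t)‖ ≤ ε t)
    (hε0 : ∀ t : ℕ, 0 ≤ ε t) (hε : ∀ t : ℕ, ε t ≤ ‖g (θ t)‖ / 4)
    (hη0 : ∀ t : ℕ, 0 ≤ η t) (hη : ∀ t : ℕ, η t ≤ 8 / (25 * (C : ℝ))) :
    (∀ T : ℕ, ∑ t ∈ Finset.range T, η t * ‖g (θ t)‖ ^ 2 ≤ 2 * (L (θ 0) - B)) ∧
      Summable (fun t : ℕ => η t * ‖g (θ t)‖ ^ 2) :=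
  surrogate_telescoping_bound_general L g hg C hLip B hB θ s η ε hθ hs hε hη0 hη
end

section
/- (Theorem 2, finite-horizon best-iterate bound.) Suppose C > 0 and L is bounded below: B ≤ L x for all x ∈ E. Let θ, s : ℕ → E and η, ε : ℕ → ℝ satisfy, for all t: θ (t+1) = θ t − η t • s t; ‖s t − g (θ t)‖ ≤ ε t; 0 ≤ ε t ≤ ‖g (θ t)‖ / 4; and 0 ≤ η t ≤ 8 / (25 * C). Then for every T : ℕ with 0 < ∑_{t ∈ Finset.range T} η t, there exists t < T such that ‖g (θ t)‖^2 ≤ 2 * (L (θ 0) − B) / (∑_{t ∈ Finset.range T} η t). -/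
/-!
By the descent lemma for a `C`-Lipschitz gradient, a step `x - η • s` with
`‖s - g x‖ ≤ ‖g x‖ / 4` has `⟪g x, s⟫ ≥ 3/4 ‖g x‖²` and `‖s‖ ≤ 5/4 ‖g x‖`, so for
`η ≤ 8 / (25 C)` the quadratic term costs at most `η/4 ‖g x‖²` and `L` drops by at least
`η/2 ‖g x‖²`. Telescoping and `B ≤ L` bound the `η`-weighted sum of `‖g (θ t)‖²` by
`2 (L (θ 0) - B)`, and some term is at most the weighted average.
-/

open RealInnerProductSpace Finset

theorem Finset.sum_range_le_sub_of_le_sub {α : Type*} [AddCommGroup α] [PartialOrder α]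
    [IsOrderedAddMonoid α] {a d : ℕ → α} (h : ∀ t, a (t + 1) ≤ a t - d t) (T : ℕ) :
    ∑ t ∈ range T, d t ≤ a 0 - a T :=
  (sum_le_sum fun t _ => le_sub_comm.mp (h t)).trans_eq (sum_range_sub' a T)

theorem Finset.exists_le_centerMass {ι R α : Type*} [Field R] [LinearOrder R]
    [IsStrictOrderedRing R] [AddCommGroup α] [LinearOrder α] [IsOrderedAddMonoid α] [Module R α]
    [PosSMulMono R α] {s : Finset ι} {w : ι → R} {f : ι → α} (hw₀ : ∀ i ∈ s, 0 ≤ w i)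
    (hw₁ : 0 < ∑ i ∈ s, w i) : ∃ i ∈ s, f i ≤ s.centerMass w f := by
  obtain ⟨i, hi, hfi⟩ := s.exists_mem_eq_inf' (nonempty_of_sum_ne_zero hw₁.ne') f
  exact ⟨i, hi, hfi ▸ inf_le_centerMass hw₀ hw₁⟩

theorem norm_sq_sub_mul_norm_sub_le_real_inner {E : Type*} [NormedAddCommGroup E]
    [InnerProductSpace ℝ E] (v s : E) : ‖v‖ ^ 2 - ‖v‖ * ‖s - v‖ ≤ ⟪v, s⟫ := by
  have hsplit : ⟪v, s⟫ = ‖v‖ ^ 2 + ⟪v, s - v⟫ := by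
    rw [inner_sub_right, real_inner_self_eq_norm_sq]; ring
  linarith [neg_le_of_abs_le (abs_real_inner_le_norm v (s - v))]

section Descent

variable {E : Type*} [NormedAddCommGroup E] [InnerProductSpace ℝ E] [CompleteSpace E]
  {L : E → ℝ} {g : E → E} {C : NNReal}

theorem le_add_inner_add_half_mul_sq_of_lipschitzWith_gradient
    (hg : ∀ x, HasGradientAt L (g x) x) (hLip : LipschitzWith C g) (x y : E) :
    L y ≤ L x + ⟪g x, y - x⟫ + C / 2 * ‖y - x‖ ^ 2 := by
  set v := y - x
  -- `ψ t` is `L` along the segment minus its quadratic upper model; it is antitone on `[0, ∞)`.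
  set ψ : ℝ → ℝ := fun t => L (x + t • v) - t * ⟪g x, v⟫ - C / 2 * t ^ 2 * ‖v‖ ^ 2
  have hψ' : ∀ t, HasDerivAt ψ (⟪g (x + t • v) - g x, v⟫ - C * t * ‖v‖ ^ 2) t := by
    intro t
    have hline : HasDerivAt (fun t : ℝ => x + t • v) v t := by
      simpa using ((hasDerivAt_id t).smul_const v).const_add x
    have hL : HasDerivAt (fun t : ℝ => L (x + t • v)) ⟪g (x + t • v), v⟫ t := by
      simpa [Function.comp_def] using (hg (x + t • v)).hasFDerivAt.comp_hasDerivAt t hline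
    have hquad : HasDerivAt (fun t : ℝ => C / 2 * t ^ 2 * ‖v‖ ^ 2) (C * t * ‖v‖ ^ 2) t :=
      (((hasDerivAt_pow 2 t).const_mul (C / 2 : ℝ)).mul_const (‖v‖ ^ 2)).congr_deriv
        (by push_cast; ring)
    exact ((hL.sub ((hasDerivAt_id t).mul_const ⟪g x, v⟫)).sub hquad).congr_deriv
      (by rw [inner_sub_left, one_mul])
  have hslope : ∀ t, 0 ≤ t → ⟪g (x + t • v) - g x, v⟫ ≤ C * t * ‖v‖ ^ 2 := by
    intro t ht
    calc ⟪g (x + t • v) - g x, v⟫ ≤ ‖g (x + t • v) - g x‖ * ‖v‖ := real_inner_le_norm _ _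
      _ ≤ C * ‖t • v‖ * ‖v‖ := by
          gcongr
          simpa [dist_eq_norm] using hLip.dist_le_mul (x + t • v) x
      _ = C * t * ‖v‖ ^ 2 := by rw [norm_smul, Real.norm_of_nonneg ht]; ring
  have hanti : AntitoneOn ψ (Set.Ici 0) :=
    antitoneOn_of_hasDerivWithinAt_nonpos (convex_Ici 0)
      (fun t _ => (hψ' t).continuousAt.continuousWithinAt)
      (fun t _ => (hψ' t).hasDerivWithinAt)
      (fun t ht => sub_nonpos.2 (hslope t (le_of_lt (by simpa using ht))))
  have h10 : ψ 1 ≤ ψ 0 :=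
    hanti (Set.mem_Ici.2 le_rfl) (Set.mem_Ici.2 zero_le_one) zero_le_one
  simp only [ψ, v, one_smul, add_sub_cancel, zero_smul, add_zero] at h10
  linarith

theorem le_sub_half_mul_sq_of_inexact_gradient_step (hg : ∀ x, HasGradientAt L (g x) x)
    (hLip : LipschitzWith C g)
    {x s : E} {η : ℝ} (hs : ‖s - g x‖ ≤ ‖g x‖ / 4) (hη0 : 0 ≤ η) (hη : η ≤ 8 / (25 * C)) :
    L (x - η • s) ≤ L x - η * ‖g x‖ ^ 2 / 2 := by
  have hinner : 3 / 4 * ‖g x‖ ^ 2 ≤ ⟪g x, s⟫ := by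
    nlinarith [norm_sq_sub_mul_norm_sub_le_real_inner (g x) s, norm_nonneg (g x)]
  have hnorm : ‖s‖ ≤ 5 / 4 * ‖g x‖ := by
    linarith [norm_le_norm_add_norm_sub' s (g x)]
  have hCη : 0 ≤ 8 / 25 - C * η := by
    nlinarith [mul_le_of_le_div₀ (by norm_num) (by positivity) hη]
  calc L (x - η • s) ≤ L x - η * ⟪g x, s⟫ + C / 2 * (η * ‖s‖) ^ 2 := by
        simpa [← sub_eq_add_neg, inner_neg_right, real_inner_smul_right, norm_smul,
          abs_of_nonneg hη0] using
          le_add_inner_add_half_mul_sq_of_lipschitzWith_gradient hg hLip x (x - η • s)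
    _ ≤ L x - η * (3 / 4 * ‖g x‖ ^ 2) + C / 2 * (η * (5 / 4 * ‖g x‖)) ^ 2 := by gcongr
    _ = L x - η * ‖g x‖ ^ 2 / 2 - 25 / 32 * η * ‖g x‖ ^ 2 * (8 / 25 - C * η) := by ring
    _ ≤ L x - η * ‖g x‖ ^ 2 / 2 := sub_le_self _ (by positivity)

end Descent

theorem surrogate_best_iterate_general
    {E : Type*} [NormedAddCommGroup E] [InnerProductSpace ℝ E] [CompleteSpace E]
    (L : E → ℝ) (g : E → E) (hg : ∀ x : E, HasGradientAt L (g x) x)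
    (C : NNReal) (hLip : LipschitzWith C g)
    (B : ℝ) (hB : ∀ x : E, B ≤ L x)
    (θ s : ℕ → E) (η ε : ℕ → ℝ)
    (hθ : ∀ t : ℕ, θ (t + 1) = θ t - η t • s t)
    (hs : ∀ t : ℕ, ‖s t - g (θ t)‖ ≤ ε t)
    (hε : ∀ t : ℕ, ε t ≤ ‖g (θ t)‖ / 4)
    (hη0 : ∀ t : ℕ, 0 ≤ η t) (hη : ∀ t : ℕ, η t ≤ 8 / (25 * (C : ℝ))) :
    ∀ T : ℕ, 0 < ∑ t ∈ Finset.range T, η t →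
      ∃ t < T, ‖g (θ t)‖ ^ 2 ≤ 2 * (L (θ 0) - B) / (∑ t ∈ Finset.range T, η t) := by
  intro T hT
  have hdecrease : ∀ t, L (θ (t + 1)) ≤ L (θ t) - η t * ‖g (θ t)‖ ^ 2 / 2 := fun t =>
    hθ t ▸ le_sub_half_mul_sq_of_inexact_gradient_step hg hLip ((hs t).trans (hε t)) (hη0 t)
      (hη t)
  have hweighted : ∑ t ∈ range T, η t * ‖g (θ t)‖ ^ 2 ≤ 2 * (L (θ 0) - B) := by
    have htelescope := sum_range_le_sub_of_le_sub (a := fun t => L (θ t)) hdecrease T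
    rw [← sum_div] at htelescope
    linarith [hB (θ T)]
  obtain ⟨t, ht, hbest⟩ :=
    exists_le_centerMass (f := fun t => ‖g (θ t)‖ ^ 2) (fun t _ => hη0 t) hT
  refine ⟨t, mem_range.1 ht, hbest.trans ?_⟩
  simp only [centerMass, smul_eq_mul, inv_mul_eq_div]
  gcongr

/-- Theorem 2, finite-horizon best-iterate bound. -/
theorem surrogate_best_iterate
    {E : Type*} [NormedAddCommGroup E] [InnerProductSpace ℝ E] [CompleteSpace E]
    (L : E → ℝ) (g : E → E) (hg : ∀ x : E, HasGradientAt L (g x) x)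
    (C : NNReal) (hLip : LipschitzWith C g) (hC : 0 < (C : ℝ))
    (B : ℝ) (hB : ∀ x : E, B ≤ L x)
    (θ s : ℕ → E) (η ε : ℕ → ℝ)
    (hθ : ∀ t : ℕ, θ (t + 1) = θ t - η t • s t)
    (hs : ∀ t : ℕ, ‖s t - g (θ t)‖ ≤ ε t)
    (hε0 : ∀ t : ℕ, 0 ≤ ε t) (hε : ∀ t : ℕ, ε t ≤ ‖g (θ t)‖ / 4)
    (hη0 : ∀ t : ℕ, 0 ≤ η t) (hη : ∀ t : ℕ, η t ≤ 8 / (25 * (C : ℝ))) :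
    ∀ T : ℕ, 0 < ∑ t ∈ Finset.range T, η t →
      ∃ t < T, ‖g (θ t)‖ ^ 2 ≤ 2 * (L (θ 0) - B) / (∑ t ∈ Finset.range T, η t) :=
  surrogate_best_iterate_general L g hg C hLip B hB θ s η ε hθ hs hε hη0 hη
end
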